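/- arXiv:2203.03285 — 6 statements merged into one kernel-verified Lean document; each statement's English description precedes it below -/
import Mathlib

section
/- The radius of each twin circle of the arbelos satisfies 1/r = 1/R₁ + 1/R₂, i.e. r = R₁R₂/(R₁+R₂); equivalently, r is half the harmonic mean of R₁ and R₂. -/
lemma dist_sq_two (P Q : EuclideanSpace ℝ (Fin 2)) :
    dist P Q ^ 2 = (P 0 - Q 0) ^ 2 + (P 1 - Q 1) ^ 2 := by
  rw [EuclideanSpace.dist_eq, Real.sq_sqrt (by positivity), Fin.sum_univ_two,
    Real.dist_eq, Real.dist_eq, sq_abs, sq_abs]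

/-- **Twin circle radius in the arbelos.**
Arbelos with `A₁ = (0,0)`, `M = (2R₁,0)`, `A₂ = (2R₁+2R₂,0)`; inner circle `(O₁, R₁)` with
`O₁ = (R₁,0)`, outer circle `(O, R₁+R₂)` with `O = (R₁+R₂,0)`, common internal tangent line
`l : x = 2R₁`.  A twin circle `(P, r)` is tangent to `l` (so `|P₀ - 2R₁| = r`), externally
tangent to `(O₁)` and internally tangent to `(O)`, with center off the base line.
Then `r = R₁R₂/(R₁+R₂)`, i.e. `1/r = 1/R₁ + 1/R₂`: half the harmonic mean of `R₁, R₂`. -/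
theorem arbelos_twin_radius (R₁ R₂ r : ℝ) (hR₁ : 0 < R₁) (hR₂ : 0 < R₂) (hr : 0 < r)
    (O O₁ P : EuclideanSpace ℝ (Fin 2))
    (hO : O = ![R₁ + R₂, 0]) (hO₁ : O₁ = ![R₁, 0])
    (hPoff : P 1 ≠ 0)
    (htangl : |P 0 - 2 * R₁| = r)
    (htangO₁ : dist P O₁ = R₁ + r)
    (htangO : dist P O = R₁ + R₂ - r) :
    r = R₁ * R₂ / (R₁ + R₂) ∧ 1 / r = 1 / R₁ + 1 / R₂ := by
  have h1 : (P 0 - R₁) ^ 2 + (P 1) ^ 2 = (R₁ + r) ^ 2 := by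
    have h := dist_sq_two P O₁
    rw [htangO₁, hO₁] at h
    simpa using h.symm
  have h2 : (P 0 - (R₁ + R₂)) ^ 2 + (P 1) ^ 2 = (R₁ + R₂ - r) ^ 2 := by
    have h := dist_sq_two P O
    rw [htangO, hO] at h
    simpa using h.symm
  have hy2 : (P 1) ^ 2 > 0 := by positivity
  have habs : P 0 - 2 * R₁ = r ∨ P 0 - 2 * R₁ = -r := abs_eq (le_of_lt hr) |>.mp htangl
  have hr' : r = R₁ * R₂ / (R₁ + R₂) := by
    rcases habs with h | h
    · exfalso
      nlinarith [sq_nonneg (P 1), sq_nonneg (P 0 - R₁)]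
    · have hsum : (0:ℝ) < R₁ + R₂ := by linarith
      field_simp
      nlinarith [sq_nonneg (P 1)]
  refine ⟨hr', ?_⟩
  rw [hr']
  field_simp
  ring
end

section
/- The two twin circles of the arbelos are congruent: both have radius R₁R₂/(R₁+R₂). -/
/-!
Put a twin's center at `(a, b)` with radius `r`. Subtracting the tangency conditions with the outer
circle and with `(O₁)` eliminates `b` and leaves the linear relation `a R₂ = r (2R₁ + R₂)`.
Tangency to `l` gives `a = 2R₁ ± r`; the sign `+` makes `(O₁)` and the twin touch on the base line,
forcing `b = 0`, so `a = 2R₁ - r` and hence `r (R₁ + R₂) = R₁ R₂`. The reflection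
`x ↦ 2(R₁ + R₂) - x` swaps the two inner circles and fixes the outer one, so the same computation
gives `ρ (R₁ + R₂) = R₁ R₂`.
-/

lemma EuclideanSpace.dist_sq_eq_of_ofLp_eq (P Q : EuclideanSpace ℝ (Fin 2)) {x y : ℝ}
    (hQ : Q.ofLp = ![x, y]) : dist P Q ^ 2 = (P 0 - x) ^ 2 + (P 1 - y) ^ 2 := by
  simp [EuclideanSpace.dist_sq_eq, Fin.sum_univ_two, hQ, Real.dist_eq, sq_abs]

lemma arbelos_twin_radius_mul {R₁ R₂ r a b : ℝ} (hb : b ≠ 0)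
    (h₁ : (a - R₁) ^ 2 + b ^ 2 = (R₁ + r) ^ 2)
    (hO : (a - (R₁ + R₂)) ^ 2 + b ^ 2 = (R₁ + R₂ - r) ^ 2)
    (hl : |a - 2 * R₁| = r) : r * (R₁ + R₂) = R₁ * R₂ := by
  have hlinear : a * R₂ = r * (2 * R₁ + R₂) := by linear_combination (h₁ - hO) / 2
  rcases eq_or_eq_neg_of_abs_eq hl with ha | ha
  · have hb0 : b ^ 2 = 0 := by linear_combination h₁ - (a + r) * ha
    exact absurd hb0 (pow_ne_zero 2 hb)
  · linear_combination (R₂ * ha - hlinear) / 2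

theorem arbelos_twins_congruent_general (R₁ R₂ r ρ : ℝ) (hR₁ : 0 < R₁) (hR₂ : 0 < R₂)
    (O O₁ O₂ P Q : EuclideanSpace ℝ (Fin 2))
    (hO : O = ![R₁ + R₂, 0]) (hO₁ : O₁ = ![R₁, 0]) (hO₂ : O₂ = ![2 * R₁ + R₂, 0])
    (hPoff : P 1 ≠ 0) (hQoff : Q 1 ≠ 0)
    (hPl : |P 0 - 2 * R₁| = r) (hP₁ : dist P O₁ = R₁ + r) (hPO : dist P O = R₁ + R₂ - r)
    (hQl : |Q 0 - 2 * R₁| = ρ) (hQ₂ : dist Q O₂ = R₂ + ρ) (hQO : dist Q O = R₁ + R₂ - ρ) :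
    r = ρ ∧ r = R₁ * R₂ / (R₁ + R₂) := by
  have hr : r * (R₁ + R₂) = R₁ * R₂ := by
    refine arbelos_twin_radius_mul hPoff ?_ ?_ hPl
    · rw [← hP₁, EuclideanSpace.dist_sq_eq_of_ofLp_eq P O₁ hO₁, sub_zero]
    · rw [← hPO, EuclideanSpace.dist_sq_eq_of_ofLp_eq P O hO, sub_zero]
  have hρ : ρ * (R₂ + R₁) = R₂ * R₁ := by
    refine arbelos_twin_radius_mul (a := 2 * (R₁ + R₂) - Q 0) hQoff ?_ ?_ ?_
    · rw [← hQ₂, EuclideanSpace.dist_sq_eq_of_ofLp_eq Q O₂ hO₂]; ring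
    · rw [add_comm R₂ R₁, ← hQO, EuclideanSpace.dist_sq_eq_of_ofLp_eq Q O hO]; ring
    · rw [← hQl, ← abs_neg]; ring_nf
  have hsum : R₁ + R₂ ≠ 0 := by positivity
  rw [add_comm R₂, mul_comm R₂] at hρ
  exact ⟨mul_right_cancel₀ hsum (hr.trans hρ.symm), eq_div_of_mul_eq hsum hr⟩

/-- **The twins of the arbelos are congruent.**
Arbelos with inner circles `(O₁, R₁)`, `(O₂, R₂)` where `O₁ = (R₁,0)`, `O₂ = (2R₁+R₂,0)`,
outer circle `(O, R₁+R₂)` with `O = (R₁+R₂,0)`, and common tangent line `l : x = 2R₁`.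
If `(P, r)` is tangent to `l`, externally tangent to `(O₁)` and internally tangent to `(O)`,
and `(Q, ρ)` is tangent to `l`, externally tangent to `(O₂)` and internally tangent to `(O)`
(both centers off the base line), then the two twins have the same radius
`r = ρ = R₁R₂/(R₁+R₂)`. -/
theorem arbelos_twins_congruent (R₁ R₂ r ρ : ℝ) (hR₁ : 0 < R₁) (hR₂ : 0 < R₂)
    (hr : 0 < r) (hρ : 0 < ρ)
    (O O₁ O₂ P Q : EuclideanSpace ℝ (Fin 2))
    (hO : O = ![R₁ + R₂, 0]) (hO₁ : O₁ = ![R₁, 0]) (hO₂ : O₂ = ![2 * R₁ + R₂, 0])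
    (hPoff : P 1 ≠ 0) (hQoff : Q 1 ≠ 0)
    (hPl : |P 0 - 2 * R₁| = r) (hP₁ : dist P O₁ = R₁ + r) (hPO : dist P O = R₁ + R₂ - r)
    (hQl : |Q 0 - 2 * R₁| = ρ) (hQ₂ : dist Q O₂ = R₂ + ρ) (hQO : dist Q O = R₁ + R₂ - ρ) :
    r = ρ ∧ r = R₁ * R₂ / (R₁ + R₂) :=
  arbelos_twins_congruent_general R₁ R₂ r ρ hR₁ hR₂ O O₁ O₂ P Q hO hO₁ hO₂ hPoff hQoff hPl hP₁ hPO
    hQl hQ₂ hQO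
end

section
/- The radius of the arbelos incircle (the circle tangent to all three arbelos circles) is R = R₁R₂(R₁+R₂)/(R₁² + R₁R₂ + R₂²). -/
/-- **Radius of the arbelos incircle.**
Arbelos with `O₁ = (R₁,0)`, `O₂ = (2R₁+R₂,0)`, `O = (R₁+R₂,0)`, `R₁, R₂ > 0`.
If the circle `(P, ρ)`, `ρ > 0`, is internally tangent to `(O, R₁+R₂)` and externally
tangent to both `(O₁, R₁)` and `(O₂, R₂)`, then
`ρ = R₁R₂(R₁+R₂)/(R₁² + R₁R₂ + R₂²)`. -/
theorem arbelos_incircle_radius (R₁ R₂ ρ : ℝ) (hR₁ : 0 < R₁) (hR₂ : 0 < R₂) (hρ : 0 < ρ)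
    (O O₁ O₂ P : EuclideanSpace ℝ (Fin 2))
    (hO : O = ![R₁ + R₂, 0]) (hO₁ : O₁ = ![R₁, 0]) (hO₂ : O₂ = ![2 * R₁ + R₂, 0])
    (htangO : dist P O = R₁ + R₂ - ρ)
    (htangO₁ : dist P O₁ = R₁ + ρ)
    (htangO₂ : dist P O₂ = R₂ + ρ) :
    ρ = R₁ * R₂ * (R₁ + R₂) / (R₁ ^ 2 + R₁ * R₂ + R₂ ^ 2) := by
  have key : ∀ (Q : EuclideanSpace ℝ (Fin 2)) (a r : ℝ), Q = ![a, 0] → dist P Q = r →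
      (P 0 - a) ^ 2 + (P 1) ^ 2 = r ^ 2 := by
    intro Q a r hQ hd
    have h2 : dist P Q ^ 2 = ∑ i : Fin 2, dist (P i) (Q i) ^ 2 := by
      rw [EuclideanSpace.dist_eq, Real.sq_sqrt (Finset.sum_nonneg fun i _ => sq_nonneg _)]
    rw [hd, hQ] at h2
    simp only [Fin.sum_univ_two, Real.dist_eq, sq_abs, Matrix.cons_val_zero,
      Matrix.cons_val_one, Matrix.head_cons] at h2
    linarith [h2]
  have hA := key O (R₁ + R₂) (R₁ + R₂ - ρ) hO htangO
  have hB := key O₁ R₁ (R₁ + ρ) hO₁ htangO₁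
  have hC := key O₂ (2 * R₁ + R₂) (R₂ + ρ) hO₂ htangO₂
  have hden : R₁ ^ 2 + R₁ * R₂ + R₂ ^ 2 ≠ 0 := by positivity
  field_simp
  linear_combination (-((R₁ + R₂) / 4 - R₂ / 4)) * hB + ((R₁ + R₂) / 4) * hA - (R₂ / 4) * hC
end

section
/- Let r₁ = R₁/2, r₂ = R₂/2 and let D₂ be the pole, with respect to the circle (O₂, R₂), of the tangent line from O₁ to the sibling circle (S₂) of diameter [O₂M]. Then O₂D₂ = 2r₂(2r₁+r₂)/(r₁+r₂) and O₂D₂ - R₂ = 2r₁r₂/(r₁+r₂) = R₁R₂/(R₁+R₂). -/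
open scoped RealInnerProductSpace

/-!
`O₁`, `S₂`, `O₂` lie on a ray from `O₁ ∈ t` with `O₁O₂ = 2(R₁+R₂)/(2R₁+R₂) · O₁S₂`, so by
similar triangles `O₂P₂` is that multiple of the radius `S₂T = R₂/2` of the sibling circle, and
the pole lies at distance `O₂D₂ = R₂² / O₂P₂` from `O₂`.
-/

section FootOnLine

variable {V : Type*} [NormedAddCommGroup V] [InnerProductSpace ℝ V] {T v X P : V}

theorem eq_add_inner_smul_of_inner_sub_eq_zero (hv : ‖v‖ = 1) (hP : ∃ s : ℝ, P = T + s • v)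
    (hPX : ⟪P - X, v⟫ = 0) : P = T + ⟪X - T, v⟫ • v := by
  obtain ⟨s, rfl⟩ := hP
  have hs : s = ⟪X - T, v⟫ := by
    rw [show T + s • v - X = -(X - T) + s • v by abel, inner_add_left, inner_neg_left,
      real_inner_smul_left, real_inner_self_eq_norm_sq, hv] at hPX
    linarith
  rw [hs]

/-- Similar triangles: the perpendiculars dropped on a line through `O` from points of a ray
issuing from `O` are proportional to the distances of those points from `O`. -/
theorem foot_sub_eq_smul_foot_sub_of_sub_eq_smul {O Y Q : V} {k : ℝ} (hv : ‖v‖ = 1)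
    (hO : ∃ s : ℝ, O = T + s • v)
    (hP : ∃ s : ℝ, P = T + s • v) (hPX : ⟪P - X, v⟫ = 0)
    (hQ : ∃ s : ℝ, Q = T + s • v) (hQY : ⟪Q - Y, v⟫ = 0)
    (hXY : X - O = k • (Y - O)) : P - X = k • (Q - Y) := by
  obtain ⟨s, rfl⟩ := hO
  rw [eq_add_inner_smul_of_inner_sub_eq_zero hv hP hPX,
    eq_add_inner_smul_of_inner_sub_eq_zero hv hQ hQY]
  have hX : X - T = s • v + k • (Y - T - s • v) := by
    rw [← sub_add_sub_cancel X (T + s • v) T, hXY]; module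
  have hinner : ⟪X - T, v⟫ = s + k * (⟪Y - T, v⟫ - s) := by
    rw [hX, inner_add_left, real_inner_smul_left, real_inner_smul_left, inner_sub_left,
      real_inner_smul_left, real_inner_self_eq_norm_sq, hv]
    ring
  calc T + ⟪X - T, v⟫ • v - X = ⟪X - T, v⟫ • v - (X - T) := by abel
    _ = k • (T + ⟪Y - T, v⟫ • v - Y) := by rw [hinner, hX]; module

end FootOnLine

theorem pole_of_tangent_to_sibling_general (R₁ R₂ : ℝ) (hR₁ : 0 < R₁) (hR₂ : 0 < R₂)
    (O₁ M O₂ S₂ T v P₂ D₂ : EuclideanSpace ℝ (Fin 2))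
    (hO₁ : O₁ = ![R₁, 0]) (hM : M = ![2 * R₁, 0]) (hO₂ : O₂ = ![2 * R₁ + R₂, 0])
    (hS₂ : S₂ = midpoint ℝ O₂ M)
    (hv : ‖v‖ = 1)
    (hT : dist T S₂ = R₂ / 2)            -- `T` is on the sibling circle
    (hperpT : ⟪T - S₂, v⟫ = 0)           -- `t` is tangent to `(S₂)` at `T`
    (hO₁mem : ∃ s : ℝ, O₁ = T + s • v)   -- `t` passes through `O₁`
    (hP₂mem : ∃ s : ℝ, P₂ = T + s • v)   -- `P₂` lies on `t`
    (hP₂perp : ⟪P₂ - O₂, v⟫ = 0)         -- `P₂` is the projection of `O₂` on `t`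
    (hD₂inv : dist O₂ P₂ * dist O₂ D₂ = R₂ ^ 2) :
    dist O₂ D₂ = 2 * (R₂ / 2) * (2 * (R₁ / 2) + R₂ / 2) / (R₁ / 2 + R₂ / 2) ∧
      dist O₂ D₂ - R₂ = R₁ * R₂ / (R₁ + R₂) := by
  have hk : O₂ - O₁ = (2 * (R₁ + R₂) / (2 * R₁ + R₂)) • (S₂ - O₁) := by
    have : 2 * R₁ + R₂ ≠ 0 := by positivity
    ext i
    fin_cases i
    · simp [hS₂, midpoint_eq_smul_add, hO₁, hO₂, hM]
      field_simp
      ring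
    · simp [hS₂, midpoint_eq_smul_add, hO₁, hO₂, hM]
  have hP₂ : P₂ - O₂ = (2 * (R₁ + R₂) / (2 * R₁ + R₂)) • (T - S₂) :=
    foot_sub_eq_smul_foot_sub_of_sub_eq_smul hv hO₁mem hP₂mem hP₂perp ⟨0, by simp⟩ hperpT hk
  have hO₂P₂ : dist O₂ P₂ = (R₁ + R₂) * R₂ / (2 * R₁ + R₂) := by
    rw [dist_comm, dist_eq_norm, hP₂, norm_smul, ← dist_eq_norm, hT,
      Real.norm_of_nonneg (by positivity)]
    ring
  have hO₂D₂ : dist O₂ D₂ = R₂ * (2 * R₁ + R₂) / (R₁ + R₂) := by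
    rw [hO₂P₂] at hD₂inv
    field_simp at hD₂inv ⊢
    linarith
  rw [hO₂D₂]
  constructor
  · field_simp
  · field_simp
    ring

/-- **The pole `D₂` of the tangent from `O₁` to the sibling circle.**
Arbelos with `O₁ = (R₁,0)`, `M = (2R₁,0)`, `O₂ = (2R₁+R₂,0)`; the sibling circle `(S₂)`
has diameter `[O₂M]`, center `S₂ = midpoint(O₂, M)` and radius `R₂/2`.  Let `t` be a line
through `O₁` tangent to `(S₂)` (tangency point `T`, unit direction `v`), let `P₂` be the
orthogonal projection of `O₂` onto `t`, and let `D₂` be the inverse of `P₂` in `(O₂, R₂)`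
(the pole of `t`), so `D₂` lies on the ray from `O₂` through `P₂` and
`O₂P₂ · O₂D₂ = R₂²`.  Then, with `r₁ = R₁/2`, `r₂ = R₂/2`,
`O₂D₂ = 2r₂(2r₁+r₂)/(r₁+r₂)` and `O₂D₂ - R₂ = 2r₁r₂/(r₁+r₂) = R₁R₂/(R₁+R₂)`. -/
theorem pole_of_tangent_to_sibling (R₁ R₂ : ℝ) (hR₁ : 0 < R₁) (hR₂ : 0 < R₂)
    (O₁ M O₂ S₂ T v P₂ D₂ : EuclideanSpace ℝ (Fin 2))
    (hO₁ : O₁ = ![R₁, 0]) (hM : M = ![2 * R₁, 0]) (hO₂ : O₂ = ![2 * R₁ + R₂, 0])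
    (hS₂ : S₂ = midpoint ℝ O₂ M)
    (hv : ‖v‖ = 1)
    (hT : dist T S₂ = R₂ / 2)            -- `T` is on the sibling circle
    (hperpT : ⟪T - S₂, v⟫ = 0)           -- `t` is tangent to `(S₂)` at `T`
    (hO₁mem : ∃ s : ℝ, O₁ = T + s • v)   -- `t` passes through `O₁`
    (hP₂mem : ∃ s : ℝ, P₂ = T + s • v)   -- `P₂` lies on `t`
    (hP₂perp : ⟪P₂ - O₂, v⟫ = 0)         -- `P₂` is the projection of `O₂` on `t`
    (hD₂ray : ∃ c : ℝ, 0 ≤ c ∧ D₂ = O₂ + c • (P₂ - O₂))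
    (hD₂inv : dist O₂ P₂ * dist O₂ D₂ = R₂ ^ 2) :
    dist O₂ D₂ = 2 * (R₂ / 2) * (2 * (R₁ / 2) + R₂ / 2) / (R₁ / 2 + R₂ / 2) ∧
      dist O₂ D₂ - R₂ = R₁ * R₂ / (R₁ + R₂) :=
  pole_of_tangent_to_sibling_general R₁ R₂ hR₁ hR₂ O₁ M O₂ S₂ T v P₂ D₂ hO₁ hM hO₂ hS₂ hv hT hperpT
    hO₁mem hP₂mem hP₂perp hD₂inv
end

section
/- The i-circle of the doubling arbelos — the circle externally tangent to the circles (A₁, 2R₁) and (A₂, 2R₂) and internally tangent to the outer circle (O, R₁+R₂) — is archimedean: its radius s satisfies 1/s = 1/R₁ + 1/R₂. -/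
/-! The centre `O` of the outer circle is the midpoint of `A₁A₂`, so Apollonius's theorem for the
median `SO` of the triangle `S A₁ A₂` relates the three tangency distances; the quadratic terms in
`s` cancel and what is left is `s (R₁ + R₂) = R₁ R₂`. -/

open EuclideanGeometry in
theorem icircle_radius_mul_add_eq_mul {V P : Type*} [NormedAddCommGroup V]
    [InnerProductSpace ℝ V] [MetricSpace P] [NormedAddTorsor V P] {A₁ A₂ S : P} {R₁ R₂ s : ℝ}
    (hA : dist A₁ A₂ = 2 * (R₁ + R₂)) (h₁ : dist S A₁ = s + 2 * R₁)
    (h₂ : dist S A₂ = s + 2 * R₂) (hO : dist S (midpoint ℝ A₁ A₂) = R₁ + R₂ - s) :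
    s * (R₁ + R₂) = R₁ * R₂ := by
  have apollonius := dist_sq_add_dist_sq_eq_two_mul_dist_midpoint_sq_add_half_dist_sq S A₁ A₂
  rw [hA, h₁, h₂, hO] at apollonius
  linear_combination apollonius / 8

theorem one_div_eq_one_div_add_one_div_of_mul_add_eq_mul {K : Type*} [Field K] {R₁ R₂ s : K}
    (hR₁ : R₁ ≠ 0) (hR₂ : R₂ ≠ 0) (h : s * (R₁ + R₂) = R₁ * R₂) :
    1 / s = 1 / R₁ + 1 / R₂ := by
  have hs : s ≠ 0 := by
    rintro rfl
    simp_all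
  field_simp
  linear_combination -h

theorem doubling_arbelos_icircle_archimedean_general (R₁ R₂ s : ℝ)
    (hR₁ : 0 < R₁) (hR₂ : 0 < R₂)
    (A₁ A₂ O S : EuclideanSpace ℝ (Fin 2))
    (hA₁ : A₁ = !₂[0, 0]) (hA₂ : A₂ = !₂[2 * R₁ + 2 * R₂, 0]) (hO : O = !₂[R₁ + R₂, 0])
    (htangA₁ : dist S A₁ = s + 2 * R₁)
    (htangA₂ : dist S A₂ = s + 2 * R₂)
    (htangO : dist S O = R₁ + R₂ - s) :
    1 / s = 1 / R₁ + 1 / R₂ := by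
  have hA : dist A₁ A₂ = 2 * (R₁ + R₂) := by
    rw [hA₁, hA₂, EuclideanSpace.dist_eq, mul_add]
    simp [Real.sqrt_sq (by positivity : (0 : ℝ) ≤ 2 * R₁ + 2 * R₂)]
  have hmid : O = midpoint ℝ A₁ A₂ := by
    subst hA₁ hA₂ hO
    ext i
    fin_cases i <;> simp [midpoint_eq_smul_add, mul_add]
  rw [hmid] at htangO
  exact one_div_eq_one_div_add_one_div_of_mul_add_eq_mul hR₁.ne' hR₂.ne'
    (icircle_radius_mul_add_eq_mul hA htangA₁ htangA₂ htangO)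

/-- **The i-circle of the doubling arbelos is archimedean.**
Doubling arbelos: `A₁ = (0,0)`, `A₂ = (2R₁+2R₂,0)`, `O = (R₁+R₂,0)`, with the added
circles `(A₁, 2R₁)` and `(A₂, 2R₂)`.  If the circle `(S, s)`, `s > 0`, is externally
tangent to `(A₁, 2R₁)` and `(A₂, 2R₂)` and internally tangent to `(O, R₁+R₂)`, then
`1/s = 1/R₁ + 1/R₂`. -/
theorem doubling_arbelos_icircle_archimedean (R₁ R₂ s : ℝ)
    (hR₁ : 0 < R₁) (hR₂ : 0 < R₂) (hs : 0 < s)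
    (A₁ A₂ O S : EuclideanSpace ℝ (Fin 2))
    (hA₁ : A₁ = !₂[0, 0]) (hA₂ : A₂ = !₂[2 * R₁ + 2 * R₂, 0]) (hO : O = !₂[R₁ + R₂, 0])
    (htangA₁ : dist S A₁ = s + 2 * R₁)
    (htangA₂ : dist S A₂ = s + 2 * R₂)
    (htangO : dist S O = R₁ + R₂ - s) :
    1 / s = 1 / R₁ + 1 / R₂ :=
  doubling_arbelos_icircle_archimedean_general R₁ R₂ s hR₁ hR₂ A₁ A₂ O S hA₁ hA₂ hO htangA₁ htangA₂
    htangO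
end

section
/- For the circle of diameter [A₂O₁'] arising as the polar dual of the ellipse focused at O and O₂ passing through A₂ (w.r.t. inversion in (O, R₁+R₂)), and the corresponding circle of diameter [A₁O₂'], their external common tangent meets the center line at the external similitude center H, and the projection P of O onto this common tangent satisfies OP = (R₁+R₂)(R₁²+R₁R₂+R₂²)/(R₁²+R₂²). -/
open scoped RealInnerProductSpace

/-!
Along the x-axis, the signed distance `x ↦ ⟪(x, 0), n⟫ - c` to the tangent `t` is an affine
function of `x`. Tangency pins its values at the centres of `Γ₁` and `Γ₂` to the radii, so its
value at `O`, which is `OP`, follows by linear interpolation.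
-/

theorem dist_self_sub_smul {E : Type*} [SeminormedAddCommGroup E] [NormedSpace ℝ E] (x v : E)
    (s : ℝ) : dist x (x - s • v) = |s| * ‖v‖ := by
  rw [dist_eq_norm, sub_sub_cancel, norm_smul, Real.norm_eq_abs]

theorem affine_eq_of_two_points {a c m₁ m₂ ρ₁ ρ₂ : ℝ} (hm : m₁ ≠ m₂)
    (h₁ : m₁ * a - c = ρ₁) (h₂ : m₂ * a - c = ρ₂) (s : ℝ) :
    s * a - c = (ρ₁ * (m₂ - s) + ρ₂ * (s - m₁)) / (m₂ - m₁) := by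
  rw [eq_div_iff (sub_ne_zero.2 hm.symm), ← h₁, ← h₂]
  ring

theorem inner_vec2_zero_left (x : ℝ) (n : EuclideanSpace ℝ (Fin 2)) :
    ⟪!₂[x, 0], n⟫ = x * n 0 := by
  simp [PiLp.inner_apply, Fin.sum_univ_two, mul_comm]

theorem midpoint_vec2_zero (x y : ℝ) :
    midpoint ℝ !₂[x, 0] !₂[y, 0] = !₂[(x + y) / 2, 0] := by
  ext i; fin_cases i <;> simp [midpoint_eq_smul_add]; ring

theorem dist_vec2_zero (x y : ℝ) : dist !₂[x, 0] !₂[y, 0] = |x - y| := by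
  simp [EuclideanSpace.dist_eq, Fin.sum_univ_two, Real.dist_eq, Real.sqrt_sq_eq_abs]

/-- **The common external tangent of the two reciprocal circles.**
Arbelos: `A₁ = (0,0)`, `A₂ = (2R₁+2R₂,0)`, `O = (R₁+R₂,0)`.  The inverses of
`O₁ = (R₁,0)` and `O₂ = (2R₁+R₂,0)` in the circle `(O, R₁+R₂)` are
`O₁' = (R₁+R₂) - (R₁+R₂)²/R₂` and `O₂' = (R₁+R₂) + (R₁+R₂)²/R₁` on the x-axis.
Consider the circle `Γ₁` of diameter `[A₁O₂']` (center `c₁`, radius `ρ₁`) and `Γ₂` of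
diameter `[A₂O₁']` (center `c₂`, radius `ρ₂`), both diameters on the x-axis, and a common
external tangent line `t = {Q : ⟪Q, n⟫ = c}` (unit normal `n`, centers on the same side:
`⟪c₁, n⟫ - c = ρ₁` and `⟪c₂, n⟫ - c = ρ₂`).  If `P` is the orthogonal projection of `O`
onto `t`, then `OP = (R₁+R₂)(R₁²+R₁R₂+R₂²)/(R₁²+R₂²)`. -/
theorem common_tangent_projection_distance (R₁ R₂ c : ℝ) (hR₁ : 0 < R₁) (hR₂ : 0 < R₂)
    (A₁ A₂ O O₁' O₂' c₁ c₂ n P : EuclideanSpace ℝ (Fin 2))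
    (hA₁ : A₁ = !₂[0, 0]) (hA₂ : A₂ = !₂[2 * R₁ + 2 * R₂, 0]) (hO : O = !₂[R₁ + R₂, 0])
    (hO₁' : O₁' = !₂[(R₁ + R₂) - (R₁ + R₂) ^ 2 / R₂, 0])
    (hO₂' : O₂' = !₂[(R₁ + R₂) + (R₁ + R₂) ^ 2 / R₁, 0])
    (hc₁ : c₁ = midpoint ℝ A₁ O₂') (hc₂ : c₂ = midpoint ℝ A₂ O₁')
    (ρ₁ ρ₂ : ℝ) (hρ₁ : ρ₁ = dist A₁ O₂' / 2) (hρ₂ : ρ₂ = dist A₂ O₁' / 2)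
    (hn : ‖n‖ = 1)
    (htang₁ : ⟪c₁, n⟫ - c = ρ₁)    -- `t` tangent to `Γ₁`, center on the positive side
    (htang₂ : ⟪c₂, n⟫ - c = ρ₂)    -- `t` tangent to `Γ₂`, same side (external tangent)
    (hP : P = O - (⟪O, n⟫ - c) • n) :
    dist O P = (R₁ + R₂) * (R₁ ^ 2 + R₁ * R₂ + R₂ ^ 2) / (R₁ ^ 2 + R₂ ^ 2) := by
  subst hA₁ hA₂ hO hO₁' hO₂' hc₁ hc₂ hρ₁ hρ₂ hP
  simp only [midpoint_vec2_zero, inner_vec2_zero_left, dist_vec2_zero] at htang₁ htang₂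
  set S := R₁ + R₂
  have hS : 0 < S := add_pos hR₁ hR₂
  have h₁ : (S + S ^ 2 / R₁) / 2 * n 0 - c = (S + S ^ 2 / R₁) / 2 := by
    rwa [zero_add, zero_sub, abs_neg, abs_of_pos (by positivity)] at htang₁
  have h₂ : (3 * S - S ^ 2 / R₂) / 2 * n 0 - c = (S + S ^ 2 / R₂) / 2 := by
    rw [show 2 * R₁ + 2 * R₂ - (S - S ^ 2 / R₂) = S + S ^ 2 / R₂ by ring,
      abs_of_pos (by positivity)] at htang₂
    linear_combination htang₂
  have hm : (S + S ^ 2 / R₁) / 2 ≠ (3 * S - S ^ 2 / R₂) / 2 := by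
    have hu : S < S ^ 2 / R₁ := by rw [lt_div_iff₀ hR₁]; nlinarith
    have hv : S < S ^ 2 / R₂ := by rw [lt_div_iff₀ hR₂]; nlinarith
    linarith
  have hOP : ((S + S ^ 2 / R₁) / 2 * ((3 * S - S ^ 2 / R₂) / 2 - S)
      + (S + S ^ 2 / R₂) / 2 * (S - (S + S ^ 2 / R₁) / 2))
      / ((3 * S - S ^ 2 / R₂) / 2 - (S + S ^ 2 / R₁) / 2)
      = S * (R₁ ^ 2 + R₁ * R₂ + R₂ ^ 2) / (R₁ ^ 2 + R₂ ^ 2) := by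
    rw [div_eq_div_iff (sub_ne_zero.2 hm.symm) (by positivity)]
    field_simp
    ring
  rw [dist_self_sub_smul, hn, mul_one, inner_vec2_zero_left,
    affine_eq_of_two_points hm h₁ h₂, hOP, abs_of_pos (by positivity)]
end
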